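/- For every r ∈ k, the map Σ^r := Ψ_{t/(1−rt)} is an automorphism of the algebra (k⟨A⟩, ⋄): Σ^r is bijective and Σ^r(w⋄v) = Σ^r(w) ⋄ Σ^r(v) for all w,v ∈ k⟨A⟩. -/

import Mathlib

/-!
Setting (Hoffman–Ihara, "Quasi-shuffle products revisited"):
`k` is a field containing `ℚ`, `A` a countable set of letters, `kA` the `k`-vector space
with basis `A` equipped with an associative commutative bilinear product `⋄` (given below as
a bilinear map `d`), and `k⟨A⟩` the noncommutative polynomial algebra on `A`, realized as
the monoid algebra of the free monoid of words on `A`.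
-/

noncomputable section

open scoped BigOperators TensorProduct

section QuasiShuffle

variable (k A : Type*) [Field k] [CharZero k] [Countable A]

/-- `k⟨A⟩`, the noncommutative polynomial algebra on `A`: the `k`-vector space with basis
the words in `A`, with concatenation product and unit the empty word. -/
abbrev KAlg : Type _ := MonoidAlgebra k (FreeMonoid A)

/-- `kA`, the `k`-vector space with basis `A`. -/
abbrev KA : Type _ := A →₀ k

variable {k A}

/-- The basis element of `k⟨A⟩` corresponding to a word. -/
def word (w : List A) : KAlg k A := MonoidAlgebra.of k (FreeMonoid A) (FreeMonoid.ofList w)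

/-- Linear extension to `k⟨A⟩` of a function defined on words. -/
def liftW {N : Type*} [AddCommMonoid N] [Module k N] (g : List A → N) :
    KAlg k A →ₗ[k] N :=
  Finsupp.lsum k (fun w => LinearMap.toSpanSingleton k N (g (FreeMonoid.toList w))) ∘ₗ
    (MonoidAlgebra.coeffLinearEquiv k).toLinearMap

/-- The inclusion of `kA` into `k⟨A⟩` (letters as one-letter words). -/
def incl : KA k A →ₗ[k] KAlg k A :=
  Finsupp.lsum k fun a => LinearMap.toSpanSingleton k (KAlg k A) (word [a])

/-- The `⋄`-product (via the bilinear map `d` on `kA`) of the letters of a word, as an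
element of `kA`; `0` for the empty word. -/
def dChunk (d : KA k A →ₗ[k] KA k A →ₗ[k] KA k A) : List A → KA k A
  | [] => 0
  | a :: t => t.foldl (fun x b => d x (Finsupp.single b 1)) (Finsupp.single a 1)

/-- `I[w]`: for a composition `I` of the length of the word `w`, the concatenation product
of the `⋄`-products of the blocks of `w` determined by `I`. -/
def IW (d : KA k A →ₗ[k] KA k A →ₗ[k] KA k A) (w : List A) (I : Composition w.length) :
    KAlg k A :=
  ((w.splitWrtComposition I).map fun ch => incl (dChunk d ch)).prod

/-- The linear map `Ψ_f` on `k⟨A⟩` associated to a power series `f = Σ_{n≥1} c_n tⁿ`,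
where `c : ℕ → k` records the coefficients:
`Ψ_f(w) = Σ_{I composition of ℓ(w)} c_{i₁} ⋯ c_{i_m} I[w]`. -/
def Psi (d : KA k A →ₗ[k] KA k A →ₗ[k] KA k A) (c : ℕ → k) : KAlg k A →ₗ[k] KAlg k A :=
  liftW fun w => ∑ I : Composition w.length, (I.blocks.map c).prod • IW d w I

/-- Coefficients of the power series `t/(1-rt) = t + rt² + r²t³ + ⋯`. -/
def cSigR {k : Type*} [Field k] (r : k) : ℕ → k :=
  fun n => if n = 0 then 0 else r ^ (n - 1)

/-- The extension of `⋄` to a product on `k⟨A⟩`, on basis words: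
`1⋄v = v`, `u⋄1 = u`, and `(u'a)⋄(bv') = u'(a⋄b)v'`. -/
def dmWord (d : KA k A →ₗ[k] KA k A →ₗ[k] KA k A) (u v : List A) : KAlg k A :=
  match u.getLast?, v.head? with
  | none, _ => word v
  | some _, none => word u
  | some a, some b =>
      word u.dropLast * incl (d (Finsupp.single a 1) (Finsupp.single b 1)) * word v.tail

/-- The extension of `⋄` to a bilinear (associative, noncommutative) product on `k⟨A⟩`. -/
def dm (d : KA k A →ₗ[k] KA k A →ₗ[k] KA k A) :
    KAlg k A →ₗ[k] KAlg k A →ₗ[k] KAlg k A :=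
  Finsupp.lsum k (fun u => LinearMap.toSpanSingleton k (KAlg k A →ₗ[k] KAlg k A)
    (liftW fun v => dmWord d (FreeMonoid.toList u) v)) ∘ₗ
    (MonoidAlgebra.coeffLinearEquiv k).toLinearMap

set_option linter.unusedSectionVars false

section Aux

variable {k A : Type*} [Field k] [CharZero k] [Countable A]

@[simp] lemma word_nil : word ([] : List A) = (1 : KAlg k A) := rfl

lemma word_append (u v : List A) : word (u ++ v) = (word u : KAlg k A) * word v := by
  unfold word
  rw [← map_mul]
  rfl

lemma word_def (w : List A) :
    (word w : KAlg k A) = MonoidAlgebra.single (FreeMonoid.ofList w) 1 := rfl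

lemma liftW_word {N : Type*} [AddCommMonoid N] [Module k N] (g : List A → N) (w : List A) :
    liftW g (word w : KAlg k A) = g w := by
  rw [word_def, liftW, LinearMap.comp_apply, LinearEquiv.coe_coe,
    MonoidAlgebra.coeffLinearEquiv_apply, MonoidAlgebra.coeff_single]
  erw [Finsupp.lsum_single, LinearMap.toSpanSingleton_apply_one]
  rw [FreeMonoid.toList_ofList]

lemma incl_single (a : A) (c : k) :
    (incl (Finsupp.single a c) : KAlg k A) = c • word [a] := by
  rw [incl]
  erw [Finsupp.lsum_single, LinearMap.toSpanSingleton_apply]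

end Aux
section ListAux

open List

/-- Merge two block-lists: drop the last block of `A`, and replace the first block of `B`
by `A.last + B.head - 1`. -/
def joinL : List ℕ → List ℕ → List ℕ
  | [], B => B
  | [i], B => (i + B.headI - 1) :: B.tail
  | i :: j :: A, B => i :: joinL (j :: A) B

/-- Split a block-list of `p + q - 1` into blocks for the first `p` and last `q` positions,
where position `p` is shared. -/
def splitL : ℕ → List ℕ → List ℕ × List ℕ
  | _, [] => ([], [])
  | p, x :: K => if x < p then ((x :: (splitL (p - x) K).1), (splitL (p - x) K).2)
      else ([p], (x - p + 1) :: K)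

lemma pos_sum_pos {A : List ℕ} (hA : A ≠ []) (hpos : ∀ i ∈ A, 0 < i) : 0 < A.sum := by
  cases A with
  | nil => simp at hA
  | cons x t => have := hpos x (by simp); simp only [List.sum_cons]; omega

lemma joinL_sum : ∀ (A B : List ℕ), A ≠ [] → B ≠ [] → (∀ i ∈ B, 0 < i) →
    (joinL A B).sum + 1 = A.sum + B.sum
  | [], _, hA, _, _ => absurd rfl hA
  | [i], B, _, hB, hBpos => by
      cases B with
      | nil => simp at hB
      | cons j B' =>
        have hj := hBpos j (by simp)
        simp only [joinL, List.headI, List.tail, List.sum_cons, List.sum_nil]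
        omega
  | i :: j :: A, B, hA, hB, hBpos => by
      have := joinL_sum (j :: A) B (by simp) hB hBpos
      simp only [joinL, List.sum_cons] at *
      omega

lemma joinL_pos : ∀ (A B : List ℕ), A ≠ [] → B ≠ [] → (∀ i ∈ A, 0 < i) → (∀ i ∈ B, 0 < i) →
    ∀ i ∈ joinL A B, 0 < i
  | [], _, hA, _, _, _ => absurd rfl hA
  | [i], B, _, hB, hApos, hBpos => by
      cases B with
      | nil => simp at hB
      | cons j B' =>
        have hj := hBpos j (by simp)
        have hi := hApos i (by simp)
        intro x hx
        simp only [joinL, List.headI, List.tail, List.mem_cons] at hx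
        rcases hx with h | h
        · omega
        · exact hBpos x (List.mem_cons_of_mem _ h)
  | i :: j :: A, B, hA, hB, hApos, hBpos => by
      intro x hx
      simp only [joinL, List.mem_cons] at hx
      rcases hx with h | h
      · exact h ▸ hApos i (by simp)
      · exact joinL_pos (j :: A) B (by simp) hB (fun y hy => hApos y (List.mem_cons_of_mem _ hy))
          hBpos x h

lemma splitL_fst_ne_nil (p : ℕ) (K : List ℕ) (hK : K ≠ []) : (splitL p K).1 ≠ [] := by
  cases K with
  | nil => simp at hK
  | cons x K' =>
    by_cases h : x < p <;> simp [splitL, h]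

lemma splitL_fst_sum : ∀ (p : ℕ) (K : List ℕ), p ≤ K.sum → (splitL p K).1.sum = p
  | p, [], h => by simp [splitL] at h ⊢; omega
  | p, x :: K, h => by
      simp only [List.sum_cons] at h
      by_cases hx : x < p
      · have := splitL_fst_sum (p - x) K (by omega)
        simp only [splitL, hx, if_true, List.sum_cons]
        omega
      · simp [splitL, hx]

lemma splitL_snd_sum : ∀ (p : ℕ) (K : List ℕ), 0 < p → p ≤ K.sum →
    (splitL p K).2.sum + p = K.sum + 1
  | p, [], hp, h => by simp at h; omega
  | p, x :: K, hp, h => by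
      simp only [List.sum_cons] at h
      by_cases hx : x < p
      · have := splitL_snd_sum (p - x) K (by omega) (by omega)
        simp only [splitL, hx, if_true, List.sum_cons]
        omega
      · simp only [splitL, hx, if_false, List.sum_cons]
        omega

lemma splitL_fst_pos : ∀ (p : ℕ) (K : List ℕ), 0 < p → (∀ i ∈ K, 0 < i) →
    ∀ i ∈ (splitL p K).1, 0 < i
  | p, [], hp, hK => by simp [splitL]
  | p, x :: K, hp, hK => by
      by_cases hx : x < p
      · have := splitL_fst_pos (p - x) K (by omega) (fun i hi => hK i (by simp [hi]))
        simp only [splitL, hx, if_true]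
        intro i hi
        rw [List.mem_cons] at hi
        rcases hi with h | h
        · exact h ▸ hK x (by simp)
        · exact this i h
      · simp only [splitL, hx, if_false]
        intro i hi
        simp at hi
        omega

lemma splitL_snd_pos : ∀ (p : ℕ) (K : List ℕ), (∀ i ∈ K, 0 < i) →
    ∀ i ∈ (splitL p K).2, 0 < i
  | p, [], hK => by simp [splitL]
  | p, x :: K, hK => by
      by_cases hx : x < p
      · have := splitL_snd_pos (p - x) K (fun i hi => hK i (by simp [hi]))
        simp only [splitL, hx, if_true]
        exact this
      · simp only [splitL, hx, if_false]
        intro i hi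
        rw [List.mem_cons] at hi
        rcases hi with h | h
        · omega
        · exact hK i (List.mem_cons_of_mem _ h)

lemma splitL_snd_ne_nil : ∀ (p : ℕ) (K : List ℕ), 0 < p → p ≤ K.sum → (∀ i ∈ K, 0 < i) →
    (splitL p K).2 ≠ []
  | p, [], hp, h, _ => by simp at h; omega
  | p, x :: K, hp, h, hK => by
      simp only [List.sum_cons] at h
      by_cases hx : x < p
      · have hKne : K ≠ [] := by
          rintro rfl; simp at h; omega
        have := splitL_snd_ne_nil (p - x) K (by omega) (by omega)
          (fun i hi => hK i (by simp [hi]))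
        simpa [splitL, hx] using this
      · simp [splitL, hx]

lemma joinL_cons_of_ne_nil (i : ℕ) (A B : List ℕ) (hA : A ≠ []) :
    joinL (i :: A) B = i :: joinL A B := by
  cases A with
  | nil => simp at hA
  | cons j A' => rfl

lemma joinL_splitL : ∀ (p : ℕ) (K : List ℕ), 0 < p → p ≤ K.sum → (∀ i ∈ K, 0 < i) →
    joinL (splitL p K).1 (splitL p K).2 = K
  | p, [], hp, h, _ => by simp at h; omega
  | p, x :: K, hp, h, hK => by
      simp only [List.sum_cons] at h
      by_cases hx : x < p
      · have hKne : K ≠ [] := by rintro rfl; simp at h; omega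
        have hfst := splitL_fst_ne_nil (p - x) K hKne
        have := joinL_splitL (p - x) K (by omega) (by omega) (fun i hi => hK i (by simp [hi]))
        simp only [splitL, hx, if_true]
        rw [joinL_cons_of_ne_nil _ _ _ hfst, this]
      · simp only [splitL, hx, if_false, joinL, List.headI, List.tail]
        congr 1
        omega

lemma splitL_joinL : ∀ (A B : List ℕ), A ≠ [] → B ≠ [] → (∀ i ∈ A, 0 < i) →
    (∀ i ∈ B, 0 < i) → splitL A.sum (joinL A B) = (A, B)
  | [], _, hA, _, _, _ => absurd rfl hA
  | [i], B, _, hB, hApos, hBpos => by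
      cases B with
      | nil => simp at hB
      | cons j B' =>
        have hj := hBpos j (by simp)
        have hi := hApos i (by simp)
        have hlt : ¬ (i + j - 1 < i) := by omega
        simp only [joinL, List.headI, List.tail, splitL, List.sum_cons, List.sum_nil, hlt,
          if_false, add_zero]
        have : i + j - 1 - i + 1 = j := by omega
        rw [this]
  | i :: j :: A, B, hA, hB, hApos, hBpos => by
      have hApos' : ∀ x ∈ j :: A, 0 < x := fun x hx => hApos x (List.mem_cons_of_mem _ hx)
      have hj := hApos j (by simp)
      have IH := splitL_joinL (j :: A) B (by simp) hB hApos' hBpos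
      have hlt : i < (i :: j :: A).sum := by
        simp only [List.sum_cons]; omega
      simp only [joinL, List.sum_cons] at IH hlt ⊢
      rw [splitL, if_pos (show i < i + (j + A.sum) by omega),
        show i + (j + A.sum) - i = j + A.sum by omega]
      simp [IH]

end ListAux
section DlSection

variable {k A : Type*} [Field k] [CharZero k] [Countable A]
variable (d : KA k A →ₗ[k] KA k A →ₗ[k] KA k A)

/-- `⋄`-product of a list of elements of `kA` (0 for the empty list). -/
def Dl : List (KA k A) → KA k A
  | [] => 0
  | x :: t => t.foldl (fun u y => d u y) x

@[simp] lemma Dl_nil : Dl d ([] : List (KA k A)) = 0 := rfl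

lemma Dl_cons (x : KA k A) (t : List (KA k A)) :
    Dl d (x :: t) = t.foldl (fun u y => d u y) x := rfl

@[simp] lemma Dl_singleton (x : KA k A) : Dl d [x] = x := rfl

lemma dChunk_eq_Dl (ch : List A) :
    dChunk d ch = Dl d (ch.map fun a => Finsupp.single a 1) := by
  cases ch with
  | nil => rfl
  | cons a t =>
    simp only [dChunk, Dl_cons, List.map_cons, List.foldl_map]

lemma foldl_d_dd (hd : ∀ x y z : KA k A, d (d x y) z = d x (d y z)) (t : List (KA k A)) (x y : KA k A) :
    t.foldl (fun u z => d u z) (d x y) = d x (t.foldl (fun u z => d u z) y) := by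
  induction t generalizing y with
  | nil => rfl
  | cons z t ih =>
    simp only [List.foldl_cons]
    rw [hd, ih]

lemma Dl_append (hd : ∀ x y z : KA k A, d (d x y) z = d x (d y z)) (s t : List (KA k A)) (hs : s ≠ []) (ht : t ≠ []) :
    Dl d (s ++ t) = d (Dl d s) (Dl d t) := by
  cases s with
  | nil => simp at hs
  | cons x s' =>
    cases t with
    | nil => simp at ht
    | cons y t' =>
      simp only [List.cons_append, Dl_cons, List.foldl_append, List.foldl_cons]
      rw [← foldl_d_dd d hd t' _ y]

lemma Dl_key (hd : ∀ x y z : KA k A, d (d x y) z = d x (d y z)) (s t : List (KA k A)) (a b : KA k A) :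
    Dl d (s ++ d a b :: t) = d (Dl d (s ++ [a])) (Dl d (b :: t)) := by
  cases s with
  | nil =>
    simp only [List.nil_append, Dl_cons, Dl_singleton]
    rw [foldl_d_dd d hd t a b]
    rfl
  | cons x s' =>
    rw [Dl_append d hd _ _ (by simp) (by simp), Dl_append d hd _ _ (by simp) (by simp),
      Dl_singleton, Dl_cons (d := d) (d a b) t, foldl_d_dd d hd t a b, ← hd]
    rfl

/-- Folding `d` over `t` starting from a varying initial value, as a linear map. -/
def DlInit : List (KA k A) → (KA k A →ₗ[k] KA k A)
  | [] => LinearMap.id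
  | y :: t => (DlInit t).comp (d.flip y)

lemma DlInit_apply : ∀ (t : List (KA k A)) (z : KA k A),
    DlInit d t z = t.foldl (fun u y => d u y) z
  | [], z => rfl
  | y :: t, z => by
    simp only [DlInit, LinearMap.comp_apply, LinearMap.flip_apply, List.foldl_cons]
    exact DlInit_apply t (d z y)

/-- `z ↦ Dl (s ++ z :: t)` as a linear map. -/
def DlSlot (s t : List (KA k A)) : KA k A →ₗ[k] KA k A :=
  match s with
  | [] => DlInit d t
  | _ :: _ => (DlInit d t).comp (d (Dl d s))

lemma DlSlot_apply (s t : List (KA k A)) (z : KA k A) :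
    DlSlot d s t z = Dl d (s ++ z :: t) := by
  cases s with
  | nil => simp [DlSlot, DlInit_apply, Dl_cons]
  | cons x s' =>
    simp only [DlSlot, LinearMap.comp_apply]
    rw [DlInit_apply]
    simp only [List.cons_append, Dl_cons, List.foldl_append, List.foldl_cons]

end DlSection
section PsiGSection

open List

lemma splitAux_map {X Y : Type*} (f : X → Y) :
    ∀ (ns : List ℕ) (l : List X),
      (l.map f).splitWrtCompositionAux ns = (l.splitWrtCompositionAux ns).map (List.map f)
  | [], l => rfl
  | n :: ns, l => by
    rw [List.splitWrtCompositionAux_cons, List.splitWrtCompositionAux_cons, List.map_cons,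
      ← List.map_take, ← List.map_drop, splitAux_map f ns]

lemma splitAux_slot {X : Type*} :
    ∀ (ns : List ℕ) (l1 l2 : List X), l1.length < ns.sum →
      ∃ cs1 ch1 ch2 cs2, ∀ z : X,
        (l1 ++ z :: l2).splitWrtCompositionAux ns = cs1 ++ (ch1 ++ z :: ch2) :: cs2
  | [], l1, l2, h => by simp at h
  | x :: ns, l1, l2, h => by
    rcases le_or_gt x l1.length with hx | hx
    · obtain ⟨cs1, ch1, ch2, cs2, hz⟩ := splitAux_slot ns (l1.drop x) l2 (by
        rw [List.sum_cons] at h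
        rw [List.length_drop]
        omega)
      refine ⟨l1.take x :: cs1, ch1, ch2, cs2, fun z => ?_⟩
      rw [List.splitWrtCompositionAux_cons, List.take_append_of_le_length hx,
        List.drop_append_of_le_length hx, hz z, List.cons_append]
    · refine ⟨[], l1, l2.take (x - l1.length - 1),
        (l2.drop (x - l1.length - 1)).splitWrtCompositionAux ns, fun z => ?_⟩
      rw [List.splitWrtCompositionAux_cons, List.take_append,
        List.drop_append, List.take_of_length_le (le_of_lt hx),
        List.drop_eq_nil_of_le (le_of_lt hx),
        show x - l1.length = (x - l1.length - 1) + 1 by omega,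
        List.take_succ_cons, List.drop_succ_cons, List.nil_append, List.nil_append,
        Nat.add_sub_cancel]

variable {k A : Type*} [Field k] [CharZero k] [Countable A]
variable (d : KA k A →ₗ[k] KA k A →ₗ[k] KA k A)

/-- Generalized `Ψ_f`, on lists of elements of `kA`. -/
def PsiG (c : ℕ → k) (n : ℕ) (xs : List (KA k A)) : KAlg k A :=
  ∑ I : Composition n, (I.blocks.map c).prod •
    ((xs.splitWrtCompositionAux I.blocks).map fun ch => incl (Dl d ch)).prod

lemma Psi_word (c : ℕ → k) (w : List A) :
    Psi d c (word w) = PsiG d c w.length (w.map fun a => Finsupp.single a (1:k)) := by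
  rw [Psi, liftW_word, PsiG]
  refine Finset.sum_congr rfl fun I _ => ?_
  rw [IW, List.splitWrtComposition, splitAux_map, List.map_map]
  have : (fun ch => incl (dChunk d ch)) =
      ((fun ch : List (KA k A) => incl (Dl d ch)) ∘ List.map (fun a => Finsupp.single a (1:k))) := by
    funext ch
    simp [dChunk_eq_Dl, Function.comp]
  rw [this]

lemma PsiG_slot (c : ℕ → k) (n : ℕ) (l1 l2 : List (KA k A)) (h : l1.length < n) :
    ∃ L : KA k A →ₗ[k] KAlg k A, ∀ z, PsiG d c n (l1 ++ z :: l2) = L z := by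
  have hI : ∀ I : Composition n, ∃ cs1 ch1 ch2 cs2, ∀ z : KA k A,
      (l1 ++ z :: l2).splitWrtCompositionAux I.blocks = cs1 ++ (ch1 ++ z :: ch2) :: cs2 :=
    fun I => splitAux_slot I.blocks l1 l2 (by rw [I.blocks_sum]; exact h)
  choose cs1 ch1 ch2 cs2 hz using hI
  refine ⟨∑ I : Composition n, (I.blocks.map c).prod •
      ((LinearMap.mulRight k (((cs2 I).map fun ch => incl (Dl d ch)).prod)).comp
        ((LinearMap.mulLeft k (((cs1 I).map fun ch => incl (Dl d ch)).prod)).comp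
          ((incl : KA k A →ₗ[k] KAlg k A).comp (DlSlot d (ch1 I) (ch2 I))))), fun z => ?_⟩
  rw [PsiG, LinearMap.sum_apply]
  refine Finset.sum_congr rfl fun I _ => ?_
  rw [LinearMap.smul_apply]
  congr 1
  rw [hz I z, List.map_append, List.prod_append, List.map_cons, List.prod_cons,
    LinearMap.comp_apply, LinearMap.comp_apply, LinearMap.comp_apply, DlSlot_apply,
    LinearMap.mulLeft_apply, LinearMap.mulRight_apply, mul_assoc]

lemma Psi_word_incl (c : ℕ → k) (s t : List A) (x : KA k A) :
    Psi d c (word s * incl x * word t) =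
      PsiG d c (s.length + (t.length + 1))
        ((s.map fun a => Finsupp.single a (1:k)) ++ x :: (t.map fun a => Finsupp.single a (1:k))) := by
  obtain ⟨L, hL⟩ := PsiG_slot d c (s.length + (t.length + 1))
    (s.map fun a => Finsupp.single a (1:k)) (t.map fun a => Finsupp.single a (1:k))
    (by simp)
  rw [hL x]
  set M : KA k A →ₗ[k] KAlg k A := (Psi d c).comp ((LinearMap.mulRight k (word t)).comp
    ((LinearMap.mulLeft k (word s)).comp (incl : KA k A →ₗ[k] KAlg k A))) with hM
  show M x = L x
  have : M = L := by
    refine Finsupp.lhom_ext fun a b => ?_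
    have hb : (Finsupp.single a b : KA k A) = b • Finsupp.single a (1:k) :=
      (Finsupp.smul_single_one a b).symm
    rw [hb, map_smul, map_smul]
    congr 1
    rw [hM, LinearMap.comp_apply, LinearMap.comp_apply, LinearMap.comp_apply,
      LinearMap.mulLeft_apply, LinearMap.mulRight_apply, incl_single, one_smul,
      ← word_append, ← word_append]
    rw [show (s ++ [a]) ++ t = s ++ a :: t by simp]
    rw [Psi_word]
    rw [← hL (Finsupp.single a 1)]
    rw [show s.length + (t.length + 1) = (s ++ a :: t).length by simp]
    simp
  rw [this]

end PsiGSection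
section DmSection

variable {k A : Type*} [Field k] [CharZero k] [Countable A]
variable (d : KA k A →ₗ[k] KA k A →ₗ[k] KA k A)

lemma word_smul_eq_single (g : FreeMonoid A) (b : k) :
    (MonoidAlgebra.single g b : KAlg k A) = b • word (FreeMonoid.toList g) := by
  rw [word_def, FreeMonoid.ofList_toList, MonoidAlgebra.smul_single', mul_one]

lemma dm_word_word (u v : List A) : dm d (word u) (word v) = dmWord d u v := by
  rw [word_def u, dm, LinearMap.comp_apply, LinearEquiv.coe_coe,
    MonoidAlgebra.coeffLinearEquiv_apply, MonoidAlgebra.coeff_single]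
  erw [Finsupp.lsum_single, LinearMap.toSpanSingleton_apply_one]
  rw [liftW_word, FreeMonoid.toList_ofList]

lemma dmWord_nil_left (v : List A) : dmWord d [] v = word v := rfl

lemma dmWord_nil_right (u : List A) : dmWord d u [] = word u := by
  rcases List.eq_nil_or_concat u with rfl | ⟨u', a, rfl⟩
  · rfl
  · simp [dmWord, List.getLast?_concat]

lemma dmWord_concat_cons (u : List A) (a b : A) (v : List A) :
    dmWord d (u ++ [a]) (b :: v) =
      word u * incl (d (Finsupp.single a 1) (Finsupp.single b 1)) * word v := by
  simp [dmWord, List.getLast?_concat, List.dropLast_concat]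

lemma dm_one_left (y : KAlg k A) : dm d 1 y = y := by
  rw [show (1 : KAlg k A) = word [] from rfl]
  induction y using MonoidAlgebra.induction_linear with
  | zero => simp
  | add f g hf hg => rw [map_add, hf, hg]
  | single g b =>
    rw [word_smul_eq_single, map_smul, dm_word_word, dmWord_nil_left]

lemma dm_one_right (x : KAlg k A) : dm d x 1 = x := by
  rw [show (1 : KAlg k A) = word [] from rfl]
  induction x using MonoidAlgebra.induction_linear with
  | zero => simp
  | add f g hf hg => rw [map_add, LinearMap.add_apply, hf, hg]
  | single g b =>
    rw [word_smul_eq_single, map_smul, LinearMap.smul_apply, dm_word_word, dmWord_nil_right]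

lemma dm_word_mul (u v : List A) (x y : KA k A) :
    dm d (word u * incl x) (incl y * word v) = word u * incl (d x y) * word v := by
  induction x using Finsupp.induction_linear with
  | zero => simp
  | add f g hf hg => simp only [map_add, mul_add, add_mul, LinearMap.add_apply, hf, hg]
  | single a b =>
    induction y using Finsupp.induction_linear with
    | zero => simp
    | add f g hf hg => simp only [map_add, mul_add, add_mul, LinearMap.add_apply, hf, hg]
    | single e b' =>
      rw [show (Finsupp.single a b : KA k A) = b • Finsupp.single a 1 from
            (Finsupp.smul_single_one a b).symm,
          show (Finsupp.single e b' : KA k A) = b' • Finsupp.single e 1 from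
            (Finsupp.smul_single_one e b').symm]
      simp only [map_smul, LinearMap.smul_apply, smul_mul_assoc, mul_smul_comm, incl_single,
        one_smul]
      rw [← word_append, ← word_append, show ([e] : List A) ++ v = e :: v from rfl,
        dm_word_word, dmWord_concat_cons]

lemma dm_mul (X Y : KAlg k A) (x y : KA k A) :
    dm d (X * incl x) (incl y * Y) = X * incl (d x y) * Y := by
  induction X using MonoidAlgebra.induction_linear with
  | zero => simp
  | add f g hf hg => simp only [map_add, mul_add, add_mul, LinearMap.add_apply, hf, hg]
  | single gw b =>
    induction Y using MonoidAlgebra.induction_linear with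
    | zero => simp
    | add f g hf hg => simp only [map_add, mul_add, add_mul, LinearMap.add_apply, hf, hg]
    | single gv b' =>
      rw [word_smul_eq_single gw b, word_smul_eq_single gv b']
      simp only [map_smul, LinearMap.smul_apply, smul_mul_assoc, mul_smul_comm]
      rw [dm_word_mul]

/-- The set of (basis elements given by) nonempty words. -/
def NEset (k A : Type*) [Field k] [CharZero k] [Countable A] : Set (KAlg k A) :=
  {x | ∃ w : List A, w ≠ [] ∧ x = word w}

lemma incl_mem_spanNE (x : KA k A) : incl x ∈ Submodule.span k (NEset k A) := by
  have : (incl x : KAlg k A) = x.sum fun a c => c • word [a] := by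
    rw [incl, Finsupp.lsum_apply]
    exact Finsupp.sum_congr fun a _ => rfl
  rw [this, Finsupp.sum]
  exact Submodule.sum_mem _ fun a _ => Submodule.smul_mem _ _
    (Submodule.subset_span ⟨[a], by simp, rfl⟩)

lemma mul_mem_spanNE {P : KAlg k A} (hP : P ∈ Submodule.span k (NEset k A)) (Q : KAlg k A) :
    P * Q ∈ Submodule.span k (NEset k A) := by
  induction hP using Submodule.span_induction generalizing Q with
  | mem x hx =>
    obtain ⟨w, hw, rfl⟩ := hx
    induction Q using MonoidAlgebra.induction_linear with
    | zero => simp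
    | add f g hf hg => rw [mul_add]; exact Submodule.add_mem _ hf hg
    | single g b =>
      rw [word_smul_eq_single, mul_smul_comm, ← word_append]
      exact Submodule.smul_mem _ _ (Submodule.subset_span ⟨_, by simp [hw], rfl⟩)
  | zero => simp
  | add x y hx hy hx' hy' => rw [add_mul]; exact Submodule.add_mem _ (hx' _) (hy' _)
  | smul a x hx hx' => rw [smul_mul_assoc]; exact Submodule.smul_mem _ _ (hx' _)

lemma prod_chunks_mem (chs : List (List (KA k A))) (h : chs ≠ []) :
    ((chs.map fun ch => incl (Dl d ch)).prod : KAlg k A) ∈ Submodule.span k (NEset k A) := by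
  cases chs with
  | nil => simp at h
  | cons ch chs' =>
    rw [List.map_cons, List.prod_cons]
    exact mul_mem_spanNE (incl_mem_spanNE _) _

lemma dm_left {P : KAlg k A} (hP : P ∈ Submodule.span k (NEset k A)) (Z Q : KAlg k A) :
    dm d (Z * P) Q = Z * dm d P Q := by
  induction hP using Submodule.span_induction generalizing Z Q with
  | mem x hx =>
    obtain ⟨w, hw, rfl⟩ := hx
    induction Z using MonoidAlgebra.induction_linear with
    | zero => simp
    | add f g hf hg => rw [add_mul, map_add, LinearMap.add_apply, hf, hg, add_mul]
    | single gz bz =>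
      induction Q using MonoidAlgebra.induction_linear with
      | zero => simp
      | add f g hf hg => rw [map_add, map_add, hf, hg, mul_add]
      | single gq bq =>
        rw [word_smul_eq_single gz bz, word_smul_eq_single gq bq]
        simp only [map_smul, LinearMap.smul_apply, smul_mul_assoc, mul_smul_comm]
        congr 1
        congr 1
        rw [← word_append, dm_word_word, dm_word_word]
        rcases List.eq_nil_or_concat w with rfl | ⟨w', a, rfl⟩
        · simp at hw
        · simp only [List.concat_eq_append]
          cases hq : FreeMonoid.toList gq with
          | nil =>
            rw [dmWord_nil_right, dmWord_nil_right, word_append]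
          | cons y q' =>
            rw [show FreeMonoid.toList gz ++ (w' ++ [a]) = (FreeMonoid.toList gz ++ w') ++ [a]
                from (List.append_assoc _ _ _).symm,
              dmWord_concat_cons, dmWord_concat_cons, word_append]
            rw [mul_assoc, mul_assoc, mul_assoc]
  | zero => simp
  | add x y hx hy hx' hy' =>
    simp only [mul_add, add_mul, map_add, LinearMap.add_apply, hx', hy']
  | smul a x hx hx' =>
    simp only [mul_smul_comm, smul_mul_assoc, map_smul, LinearMap.smul_apply, hx']

end DmSection
section CoreSection

variable {k A : Type*} [Field k] [CharZero k] [Countable A]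
variable (d : KA k A →ₗ[k] KA k A →ₗ[k] KA k A)

lemma core_split (hd : ∀ x y z : KA k A, d (d x y) z = d x (d y z)) :
    ∀ (La : List ℕ) (s t : List (KA k A)) (Lb : List ℕ) (a b : KA k A),
    La.sum = s.length + 1 → Lb.sum = t.length + 1 → (∀ i ∈ La, 0 < i) → (∀ i ∈ Lb, 0 < i) →
    (((s ++ d a b :: t).splitWrtCompositionAux (joinL La Lb)).map
        fun ch => incl (Dl d ch)).prod
      = dm d ((((s ++ [a]).splitWrtCompositionAux La).map fun ch => incl (Dl d ch)).prod)
             ((((b :: t).splitWrtCompositionAux Lb).map fun ch => incl (Dl d ch)).prod)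
  | [], s, t, Lb, a, b, ha, hb, hapos, hbpos => by simp at ha
  | [i], s, t, Lb, a, b, ha, hb, hapos, hbpos => by
    cases Lb with
    | nil => simp at hb
    | cons j Lb' =>
      have hi : i = s.length + 1 := by simpa using ha
      subst hi
      have hj : 0 < j := hbpos j (by simp)
      obtain ⟨j', rfl⟩ : ∃ j', j = j' + 1 := ⟨j - 1, by omega⟩
      have hjt : j' ≤ t.length := by
        rw [List.sum_cons] at hb; omega
      have hjoin : joinL [s.length + 1] ((j' + 1) :: Lb') = (s.length + (j' + 1)) :: Lb' := by
        show (s.length + 1 + (j' + 1) - 1) :: Lb' = _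
        congr 1
        omega
      rw [hjoin, List.splitWrtCompositionAux_cons, List.splitWrtCompositionAux_cons]
      have htake : (s ++ d a b :: t).take (s.length + (j' + 1))
          = s ++ d a b :: t.take j' := by
        rw [List.take_append, List.take_of_length_le (by omega),
          Nat.add_sub_cancel_left, List.take_succ_cons]
      have hdrop : (s ++ d a b :: t).drop (s.length + (j' + 1)) = t.drop j' := by
        rw [List.drop_append, List.drop_eq_nil_of_le (by omega),
          Nat.add_sub_cancel_left, List.drop_succ_cons, List.nil_append]
      rw [htake, hdrop]
      have htake2 : (s ++ [a]).take (s.length + 1) = s ++ [a] :=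
        List.take_of_length_le (by simp)
      rw [htake2]
      rw [List.splitWrtCompositionAux_cons, List.take_succ_cons, List.drop_succ_cons]
      show (incl (Dl d (s ++ d a b :: t.take j')) *
          ((((t.drop j').splitWrtCompositionAux Lb').map fun ch => incl (Dl d ch)).prod)) = _
      rw [show ((s ++ [a]).drop (s.length + 1)).splitWrtCompositionAux [] = [] from rfl]
      show _ = dm d (incl (Dl d (s ++ [a])) * 1)
        (incl (Dl d (b :: t.take j')) *
          ((((t.drop j').splitWrtCompositionAux Lb').map fun ch => incl (Dl d ch)).prod))
      rw [mul_one]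
      rw [show (incl (Dl d (s ++ [a])) : KAlg k A) = 1 * incl (Dl d (s ++ [a])) from
        (one_mul _).symm]
      rw [dm_mul, Dl_key d hd, one_mul]
  | i :: j :: La', s, t, Lb, a, b, ha, hb, hapos, hbpos => by
    have hpos' : ∀ x ∈ j :: La', 0 < x := fun x hx => hapos x (List.mem_cons_of_mem _ hx)
    have hsum' : 0 < (j :: La').sum := pos_sum_pos (by simp) hpos'
    have hi : i ≤ s.length := by
      rw [List.sum_cons] at ha; omega
    have hjoin : joinL (i :: j :: La') Lb = i :: joinL (j :: La') Lb := rfl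
    rw [hjoin, List.splitWrtCompositionAux_cons, List.take_append_of_le_length hi,
      List.drop_append_of_le_length hi]
    have IH := core_split hd (j :: La') (s.drop i) t Lb a b
      (by rw [List.length_drop]; simp only [List.sum_cons] at ha ⊢; omega) hb hpos' hbpos
    rw [List.map_cons, List.prod_cons]
    conv_rhs => rw [List.splitWrtCompositionAux_cons, List.take_append_of_le_length hi,
      List.drop_append_of_le_length hi, List.map_cons, List.prod_cons]
    rw [dm_left d (prod_chunks_mem d _
      (by rw [List.splitWrtCompositionAux_cons]; exact List.cons_ne_nil _ _)), IH]

lemma joinL_coeff (c : ℕ → k) (hc : ∀ i j, 0 < i → 0 < j → c (i + j - 1) = c i * c j) :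
    ∀ (La Lb : List ℕ), La ≠ [] → Lb ≠ [] → (∀ i ∈ La, 0 < i) → (∀ i ∈ Lb, 0 < i) →
      ((joinL La Lb).map c).prod = (La.map c).prod * (Lb.map c).prod
  | [], _, hA, _, _, _ => absurd rfl hA
  | [i], Lb, _, hB, hApos, hBpos => by
    cases Lb with
    | nil => simp at hB
    | cons j Lb' =>
      have : joinL [i] (j :: Lb') = (i + j - 1) :: Lb' := rfl
      rw [this, List.map_cons, List.prod_cons, hc i j (hApos i (by simp)) (hBpos j (by simp)),
        List.map_cons, List.prod_cons]
      simp [mul_assoc]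
  | i :: j :: La', Lb, hA, hB, hApos, hBpos => by
    have : joinL (i :: j :: La') Lb = i :: joinL (j :: La') Lb := rfl
    rw [this, List.map_cons, List.prod_cons,
      joinL_coeff c hc (j :: La') Lb (by simp) hB
        (fun x hx => hApos x (List.mem_cons_of_mem _ hx)) hBpos]
    simp [mul_assoc]

lemma comp_blocks_ne_nil {n : ℕ} (hn : n ≠ 0) (I : Composition n) : I.blocks ≠ [] := by
  intro h
  have := I.blocks_sum
  rw [h] at this
  simp at this
  omega

/-- Join of compositions. -/
def cJoin {m l : ℕ} (I : Composition (m+1)) (J : Composition (l+1)) : Composition (m+l+1) where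
  blocks := joinL I.blocks J.blocks
  blocks_pos := fun {i} hi => joinL_pos I.blocks J.blocks
    (comp_blocks_ne_nil (by omega) I) (comp_blocks_ne_nil (by omega) J)
    (fun x hx => I.blocks_pos hx) (fun x hx => J.blocks_pos hx) i hi
  blocks_sum := by
    have := joinL_sum I.blocks J.blocks (comp_blocks_ne_nil (by omega) I)
      (comp_blocks_ne_nil (by omega) J) (fun x hx => J.blocks_pos hx)
    rw [I.blocks_sum, J.blocks_sum] at this
    omega

/-- First part of the splitting of a composition. -/
def cSplitFst {m l : ℕ} (K : Composition (m+l+1)) : Composition (m+1) where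
  blocks := (splitL (m+1) K.blocks).1
  blocks_pos := fun {i} hi => splitL_fst_pos (m+1) K.blocks (by omega)
    (fun x hx => K.blocks_pos hx) i hi
  blocks_sum := splitL_fst_sum (m+1) K.blocks (by rw [K.blocks_sum]; omega)

/-- Second part of the splitting of a composition. -/
def cSplitSnd {m l : ℕ} (K : Composition (m+l+1)) : Composition (l+1) where
  blocks := (splitL (m+1) K.blocks).2
  blocks_pos := fun {i} hi => splitL_snd_pos (m+1) K.blocks
    (fun x hx => K.blocks_pos hx) i hi
  blocks_sum := by
    have := splitL_snd_sum (m+1) K.blocks (by omega) (by rw [K.blocks_sum]; omega)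
    rw [K.blocks_sum] at this
    omega

lemma cJoin_bijective (m l : ℕ) :
    Function.Bijective (fun IJ : Composition (m+1) × Composition (l+1) =>
      cJoin IJ.1 IJ.2) := by
  rw [Function.bijective_iff_has_inverse]
  refine ⟨fun K => (cSplitFst K, cSplitSnd K), fun ⟨I, J⟩ => ?_, fun K => ?_⟩
  · have h := splitL_joinL I.blocks J.blocks (comp_blocks_ne_nil (by omega) I)
      (comp_blocks_ne_nil (by omega) J) (fun x hx => I.blocks_pos hx)
      (fun x hx => J.blocks_pos hx)
    rw [I.blocks_sum] at h
    simp only [Prod.mk.injEq]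
    constructor
    · exact Composition.ext (by simp [cSplitFst, cJoin, h])
    · exact Composition.ext (by simp [cSplitSnd, cJoin, h])
  · have h := joinL_splitL (m+1) K.blocks (by omega) (by rw [K.blocks_sum]; omega)
      (fun x hx => K.blocks_pos hx)
    exact Composition.ext (by simp [cSplitFst, cSplitSnd, cJoin, h])

lemma PsiG_mul (hd : ∀ x y z : KA k A, d (d x y) z = d x (d y z))
    (c : ℕ → k) (hc : ∀ i j, 0 < i → 0 < j → c (i + j - 1) = c i * c j)
    (m l : ℕ) (s t : List (KA k A)) (hs : s.length = m) (ht : t.length = l) (a b : KA k A) :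
    PsiG d c (m+l+1) (s ++ d a b :: t) =
      dm d (PsiG d c (m+1) (s ++ [a])) (PsiG d c (l+1) (b :: t)) := by
  subst hs ht
  rw [PsiG, PsiG, PsiG, map_sum]
  have step : ∀ J : Composition (t.length + 1),
      (dm d (∑ I : Composition (s.length + 1), (I.blocks.map c).prod •
          (((s ++ [a]).splitWrtCompositionAux I.blocks).map fun ch => incl (Dl d ch)).prod))
        ((J.blocks.map c).prod •
          (((b :: t).splitWrtCompositionAux J.blocks).map fun ch => incl (Dl d ch)).prod)
      = ∑ I : Composition (s.length + 1),
          ((I.blocks.map c).prod * (J.blocks.map c).prod) •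
          dm d ((((s ++ [a]).splitWrtCompositionAux I.blocks).map fun ch => incl (Dl d ch)).prod)
            ((((b :: t).splitWrtCompositionAux J.blocks).map fun ch => incl (Dl d ch)).prod) := by
    intro J
    rw [map_sum, LinearMap.sum_apply]
    refine Finset.sum_congr rfl fun I _ => ?_
    simp only [map_smul, LinearMap.smul_apply, smul_smul]
    rw [mul_comm]
  rw [Finset.sum_congr rfl fun J _ => step J, Finset.sum_comm, ← Finset.sum_product',
    Finset.univ_product_univ]
  refine (Fintype.sum_bijective _ (cJoin_bijective s.length t.length) _ _ fun IJ => ?_).symm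
  obtain ⟨I, J⟩ := IJ
  have hIb := comp_blocks_ne_nil (n := s.length + 1) (by omega) I
  have hJb := comp_blocks_ne_nil (n := t.length + 1) (by omega) J
  rw [show (cJoin I J).blocks = joinL I.blocks J.blocks from rfl,
    joinL_coeff c hc I.blocks J.blocks hIb hJb (fun x hx => I.blocks_pos hx)
      (fun x hx => J.blocks_pos hx),
    core_split d hd I.blocks s t J.blocks a b I.blocks_sum J.blocks_sum
      (fun x hx => I.blocks_pos hx) (fun x hx => J.blocks_pos hx)]

end CoreSection
section FinalSection

lemma cSigR_one {k : Type*} [Field k] (r : k) : cSigR r 1 = 1 := by simp [cSigR]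

lemma cSigR_mul {k : Type*} [Field k] (r : k) :
    ∀ i j, 0 < i → 0 < j → cSigR r (i + j - 1) = cSigR r i * cSigR r j := by
  intro i j hi hj
  simp only [cSigR, if_neg (show ¬(i + j - 1 = 0) by omega), if_neg (show ¬(i = 0) by omega),
    if_neg (show ¬(j = 0) by omega)]
  rw [show i + j - 1 - 1 = (i - 1) + (j - 1) by omega, pow_add]

lemma comp0_blocks (I : Composition 0) : I.blocks = [] := by
  cases hI : I.blocks with
  | nil => rfl
  | cons x L =>
    have hx : 0 < x := I.blocks_pos (by rw [hI]; simp)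
    have hs := I.blocks_sum
    rw [hI, List.sum_cons] at hs
    omega

variable {k A : Type*} [Field k] [CharZero k] [Countable A]
variable (d : KA k A →ₗ[k] KA k A →ₗ[k] KA k A)

lemma PsiG_congr (c : ℕ → k) {n n' : ℕ} (h : n = n') (xs : List (KA k A)) :
    PsiG d c n xs = PsiG d c n' xs := by subst h; rfl

lemma Psi_one (c : ℕ → k) : Psi d c (1 : KAlg k A) = 1 := by
  rw [show (1 : KAlg k A) = word [] from rfl, Psi_word]
  simp only [List.length_nil, List.map_nil]
  rw [PsiG]
  have h : ∀ I : Composition 0, (I.blocks.map c).prod •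
      ((List.splitWrtCompositionAux ([] : List (KA k A)) I.blocks).map
        fun ch => incl (Dl d ch)).prod = 1 := by
    intro I
    rw [comp0_blocks]
    simp only [List.map_nil, List.prod_nil, one_smul]
    rfl
  rw [Finset.sum_congr rfl fun I _ => h I]
  simp [Finset.sum_const, Finset.card_univ, composition_card]

lemma splitAux_replicate {X : Type*} : ∀ xs : List X,
    xs.splitWrtCompositionAux (List.replicate xs.length 1) = xs.map (fun x => [x])
  | [] => rfl
  | x :: xs => by
    rw [List.length_cons, List.replicate_succ, List.splitWrtCompositionAux_cons]
    simp only [List.take_succ_cons, List.take_zero, List.drop_succ_cons, List.drop_zero,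
      List.map_cons]
    rw [splitAux_replicate xs]

lemma word_as_prod : ∀ w : List A,
    ((w.map fun a => incl (Finsupp.single a (1:k))).prod : KAlg k A) = word w
  | [] => by simp
  | a :: t => by
    rw [List.map_cons, List.prod_cons, word_as_prod t, incl_single, one_smul, ← word_append]
    rfl

/-- The filtration of `k⟨A⟩` by word length. -/
def Fil (k A : Type*) [Field k] [CharZero k] [Countable A] (n : ℕ) : Submodule k (KAlg k A) :=
  Submodule.span k {x | ∃ w : List A, w.length ≤ n ∧ x = word w}

lemma Fil_mono {m n : ℕ} (h : m ≤ n) : Fil k A m ≤ Fil k A n :=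
  Submodule.span_mono (fun x ⟨w, hw, e⟩ => ⟨w, hw.trans h, e⟩)

lemma word_mem_Fil {w : List A} {n : ℕ} (h : w.length ≤ n) : (word w : KAlg k A) ∈ Fil k A n :=
  Submodule.subset_span ⟨w, h, rfl⟩

lemma word_mul_mem_Fil (a : A) {Y : KAlg k A} {n : ℕ} (hY : Y ∈ Fil k A n) :
    word [a] * Y ∈ Fil k A (n+1) := by
  induction hY using Submodule.span_induction with
  | mem x hx =>
    obtain ⟨w, hw, rfl⟩ := hx
    rw [← word_append]
    exact word_mem_Fil (by simpa using by omega)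
  | zero => simp
  | add x y hx hy hx' hy' => rw [mul_add]; exact Submodule.add_mem _ hx' hy'
  | smul a x hx hx' => rw [mul_smul_comm]; exact Submodule.smul_mem _ _ hx'

lemma incl_mul_mem_Fil (x : KA k A) {Y : KAlg k A} {n : ℕ} (hY : Y ∈ Fil k A n) :
    incl x * Y ∈ Fil k A (n+1) := by
  have hix : (incl x : KAlg k A) = x.sum fun a c => c • word [a] := by
    rw [incl, Finsupp.lsum_apply]
    exact Finsupp.sum_congr fun a _ => rfl
  rw [hix, Finsupp.sum, Finset.sum_mul]
  exact Submodule.sum_mem _ fun a _ => by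
    rw [smul_mul_assoc]
    exact Submodule.smul_mem _ _ (word_mul_mem_Fil a hY)

lemma chunks_prod_mem_Fil : ∀ chs : List (List (KA k A)),
    (((chs.map fun ch => incl (Dl d ch)).prod : KAlg k A)) ∈ Fil k A chs.length
  | [] => by
    rw [List.map_nil, List.prod_nil, show (1 : KAlg k A) = word [] from rfl]
    exact word_mem_Fil (by simp)
  | ch :: chs => by
    rw [List.map_cons, List.prod_cons, List.length_cons]
    exact incl_mul_mem_Fil _ (chunks_prod_mem_Fil chs)

lemma Psi_word_sub (r : k) (w : List A) :
    Psi d (cSigR r) (word w) - word w ∈ Fil k A (w.length - 1) := by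
  classical
  rw [Psi_word, PsiG]
  rw [Finset.sum_eq_sum_sdiff_singleton_add (Finset.mem_univ (Composition.ones w.length))]
  have hones : ((Composition.ones w.length).blocks.map (cSigR r)).prod •
      (((w.map fun a => Finsupp.single a (1:k)).splitWrtCompositionAux
        (Composition.ones w.length).blocks).map fun ch => incl (Dl d ch)).prod = word w := by
    rw [Composition.ones_blocks, List.map_replicate, List.prod_replicate, cSigR_one, one_pow,
      one_smul]
    rw [show List.replicate w.length (1:ℕ)
        = List.replicate (w.map fun a => Finsupp.single a (1:k)).length 1 by simp]
    rw [splitAux_replicate, List.map_map]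
    rw [show ((fun ch => incl (Dl d ch)) ∘ fun x : KA k A => [x]) = fun x : KA k A => incl x by
      funext x; simp]
    rw [List.map_map]
    exact word_as_prod w
  rw [hones, add_sub_cancel_right]
  refine Submodule.sum_mem _ fun I hI => Submodule.smul_mem _ _ ?_
  have hne : I ≠ Composition.ones w.length := by
    rw [Finset.mem_sdiff, Finset.mem_singleton] at hI
    exact hI.2
  have hlen : I.length ≤ w.length - 1 := by
    have h1 := Composition.length_le I
    have h2 : I.length ≠ w.length := fun h => hne (Composition.eq_ones_iff_length.mpr h)
    omega
  have := chunks_prod_mem_Fil d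
    ((w.map fun a => Finsupp.single a (1:k)).splitWrtCompositionAux I.blocks)
  rw [List.length_splitWrtCompositionAux] at this
  exact Fil_mono (by simpa using hlen) this

lemma Psi_Fil0 (c : ℕ → k) {x : KAlg k A} (hx : x ∈ Fil k A 0) : Psi d c x = x := by
  induction hx using Submodule.span_induction with
  | mem x hx =>
    obtain ⟨w, hw, rfl⟩ := hx
    have hw0 : w = [] := List.eq_nil_of_length_eq_zero (Nat.le_zero.mp hw)
    subst hw0
    rw [show (word ([]:List A) : KAlg k A) = 1 from rfl, Psi_one]
  | zero => simp
  | add x y hx hy hx' hy' => rw [map_add, hx', hy']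
  | smul a x hx hx' => rw [map_smul, hx']

lemma Psi_sub_mem (r : k) {n : ℕ} {x : KAlg k A} (hx : x ∈ Fil k A n) :
    Psi d (cSigR r) x - x ∈ Fil k A (n - 1) := by
  induction hx using Submodule.span_induction with
  | mem x hx =>
    obtain ⟨w, hw, rfl⟩ := hx
    exact Fil_mono (by omega) (Psi_word_sub d r w)
  | zero => simp
  | add x y hx hy hx' hy' =>
    rw [map_add, add_sub_add_comm]
    exact Submodule.add_mem _ hx' hy'
  | smul a x hx hx' =>
    rw [map_smul, ← smul_sub]
    exact Submodule.smul_mem _ _ hx'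

lemma exists_Fil (x : KAlg k A) : ∃ n, x ∈ Fil k A n := by
  induction x using MonoidAlgebra.induction_linear with
  | zero => exact ⟨0, Submodule.zero_mem _⟩
  | add f g hf hg =>
    obtain ⟨m, hm⟩ := hf
    obtain ⟨n, hn⟩ := hg
    exact ⟨max m n, Submodule.add_mem _ (Fil_mono (le_max_left m n) hm)
      (Fil_mono (le_max_right m n) hn)⟩
  | single g b =>
    refine ⟨(FreeMonoid.toList g).length, ?_⟩
    rw [word_smul_eq_single]
    exact Submodule.smul_mem _ _ (word_mem_Fil le_rfl)

lemma Psi_inj_aux (r : k) : ∀ n : ℕ, ∀ x : KAlg k A, x ∈ Fil k A n →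
    Psi d (cSigR r) x = 0 → x = 0 := by
  intro n
  induction n with
  | zero => intro x hx h; rw [← Psi_Fil0 d (cSigR r) hx, h]
  | succ n ih =>
    intro x hx h
    have h2 := Psi_sub_mem d r hx
    rw [h, zero_sub, Nat.add_sub_cancel] at h2
    exact ih x ((Submodule.neg_mem_iff _).mp h2) h

lemma Psi_surj_aux (r : k) : ∀ n : ℕ, ∀ y : KAlg k A, y ∈ Fil k A n →
    ∃ x ∈ Fil k A n, Psi d (cSigR r) x = y := by
  intro n
  induction n with
  | zero => intro y hy; exact ⟨y, hy, Psi_Fil0 d (cSigR r) hy⟩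
  | succ n ih =>
    intro y hy
    have he : Psi d (cSigR r) y - y ∈ Fil k A n := by
      have := Psi_sub_mem d r hy
      rwa [Nat.add_sub_cancel] at this
    obtain ⟨x', hx'F, hx'⟩ := ih _ he
    refine ⟨y - x', Submodule.sub_mem _ hy (Fil_mono (Nat.le_succ n) hx'F), ?_⟩
    rw [map_sub, hx', sub_sub_cancel]

lemma Psi_dm_words (hd : ∀ x y z : KA k A, d (d x y) z = d x (d y z)) (r : k) (u v : List A) :
    Psi d (cSigR r) (dm d (word u) (word v))
      = dm d (Psi d (cSigR r) (word u)) (Psi d (cSigR r) (word v)) := by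
  rw [dm_word_word]
  rcases List.eq_nil_or_concat u with rfl | ⟨s, a0, rfl⟩
  · rw [dmWord_nil_left, show (word ([]:List A) : KAlg k A) = 1 from rfl, Psi_one, dm_one_left]
  · cases v with
    | nil =>
      rw [dmWord_nil_right, show (word ([]:List A) : KAlg k A) = 1 from rfl, Psi_one,
        dm_one_right]
    | cons b0 t =>
      simp only [List.concat_eq_append]
      rw [dmWord_concat_cons, Psi_word_incl]
      rw [PsiG_congr d (cSigR r) (show s.length + (t.length + 1) = s.length + t.length + 1
        from rfl)]
      rw [PsiG_mul d hd (cSigR r) (cSigR_mul r) s.length t.length _ _ (by rw [List.length_map])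
        (by rw [List.length_map]) (Finsupp.single a0 1) (Finsupp.single b0 1)]
      congr 1
      · rw [Psi_word, PsiG_congr d (cSigR r) (show (s ++ [a0]).length = s.length + 1 by simp),
          List.map_append, List.map_singleton]
      · rw [Psi_word, PsiG_congr d (cSigR r) (show (b0 :: t).length = t.length + 1 by simp),
          List.map_cons]

lemma Psi_dm_full (hd : ∀ x y z : KA k A, d (d x y) z = d x (d y z)) (r : k) (x y : KAlg k A) :
    Psi d (cSigR r) (dm d x y) = dm d (Psi d (cSigR r) x) (Psi d (cSigR r) y) := by
  induction x using MonoidAlgebra.induction_linear with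
  | zero => simp
  | add f g hf hg => simp only [map_add, LinearMap.add_apply, hf, hg]
  | single gu bu =>
    induction y using MonoidAlgebra.induction_linear with
    | zero => simp
    | add f g hf hg => simp only [map_add, hf, hg]
    | single gv bv =>
      rw [word_smul_eq_single gu bu, word_smul_eq_single gv bv]
      simp only [map_smul, LinearMap.smul_apply, map_smul]
      rw [Psi_dm_words d hd r]

end FinalSection

/-- Corollary 4.8 of Hoffman–Ihara: for every `r ∈ k`,
`Σ^r = Ψ_{t/(1-rt)}` is an automorphism of the algebra `(k⟨A⟩, ⋄)`. -/
theorem SigmaR_diamond_automorphism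
    {k A : Type*} [Field k] [CharZero k] [Countable A]
    (d : KA k A →ₗ[k] KA k A →ₗ[k] KA k A)
    (hd_comm : ∀ x y, d x y = d y x)
    (hd_assoc : ∀ x y z, d (d x y) z = d x (d y z))
    (r : k) :
    Function.Bijective (Psi d (cSigR r)) ∧
    (∀ x y, Psi d (cSigR r) (dm d x y) = dm d (Psi d (cSigR r) x) (Psi d (cSigR r) y)) := by
  refine ⟨⟨?_, ?_⟩, fun x y => Psi_dm_full d hd_assoc r x y⟩
  · intro x y hxy
    have h : Psi d (cSigR r) (x - y) = 0 := by rw [map_sub, hxy, sub_self]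
    obtain ⟨n, hn⟩ := exists_Fil (x - y)
    exact sub_eq_zero.mp (Psi_inj_aux d r n _ hn h)
  · intro y
    obtain ⟨n, hn⟩ := exists_Fil y
    obtain ⟨x, _, hx⟩ := Psi_surj_aux d r n y hn
    exact ⟨x, hx⟩

end QuasiShuffle
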